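/- arXiv:2006.11189 — 2 statements merged into one kernel-verified Lean document; each statement's English description precedes it below -/
import Mathlib

section
/- Let (𝒳, ω) be a left Frobenius pair in an abelian category 𝒞. Then for every n ≥ 0, the pair (𝒳, 𝒳^⊥) is a complete cotorsion pair cut along 𝒳^∧_n. -/
namespace CutPaper

open CategoryTheory CategoryTheory.Limits CategoryTheory.Abelian ZeroObject

universe w v u

variable {C : Type u} [Category.{v} C] [Abelian C]

/-- There exists a short exact sequence `0 ⟶ X ⟶ Y ⟶ Z ⟶ 0` in `C`. -/
def SES (X Y Z : C) : Prop :=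
  ∃ (f : X ⟶ Y) (g : Y ⟶ Z) (zero : f ≫ g = 0),
    (ShortComplex.mk f g zero).ShortExact

/-- A class of objects is closed under isomorphisms. -/
def ClosedUnderIso (A : Set C) : Prop :=
  ∀ ⦃X Y : C⦄, (X ≅ Y) → X ∈ A → Y ∈ A

/-- A class of objects is closed under direct summands (i.e. retracts). -/
def ClosedUnderDirectSummands (A : Set C) : Prop :=
  ∀ ⦃X Y : C⦄ (i : X ⟶ Y) (r : Y ⟶ X), i ≫ r = 𝟙 X → Y ∈ A → X ∈ A

/-- A class of objects is closed under extensions. -/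
def ClosedUnderExtensions (A : Set C) : Prop :=
  ∀ ⦃X Y Z : C⦄, SES X Y Z → X ∈ A → Z ∈ A → Y ∈ A

/-- A class of objects is closed under kernels of epimorphisms between its objects. -/
def ClosedUnderEpiKernels (A : Set C) : Prop :=
  ∀ ⦃X Y Z : C⦄, SES X Y Z → Y ∈ A → Z ∈ A → X ∈ A

/-- A class of objects is closed under cokernels of monomorphisms between its objects. -/
def ClosedUnderMonoCokernels (A : Set C) : Prop :=
  ∀ ⦃X Y Z : C⦄, SES X Y Z → X ∈ A → Y ∈ A → Z ∈ A

/-- A class is left thick if it is closed under extensions, epi-kernels and direct summands. -/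
def LeftThick (A : Set C) : Prop :=
  ClosedUnderExtensions A ∧ ClosedUnderEpiKernels A ∧ ClosedUnderDirectSummands A

/-- A class is right thick if closed under extensions, mono-cokernels and direct summands. -/
def RightThick (A : Set C) : Prop :=
  ClosedUnderExtensions A ∧ ClosedUnderMonoCokernels A ∧ ClosedUnderDirectSummands A

/-- A class is thick if it is both left and right thick. -/
def IsThickClass (A : Set C) : Prop := LeftThick A ∧ RightThick A

/-- The smallest thick class containing `F`. -/
def ThickClosure (F : Set C) : Set C := ⋂₀ {T : Set C | IsThickClass T ∧ F ⊆ T}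

/-- A class is closed under finite (binary) coproducts. -/
def ClosedUnderBinaryCoproducts (A : Set C) : Prop :=
  ∀ ⦃X Y : C⦄, X ∈ A → Y ∈ A → (X ⊞ Y) ∈ A

/-- `ω` is a relative cogenerator in `A`: `ω ⊆ A` and every `X ∈ A` fits in a short
exact sequence `0 → X → W → X' → 0` with `W ∈ ω`, `X' ∈ A`. -/
def IsRelativeCogenerator (ω A : Set C) : Prop :=
  ω ⊆ A ∧ ∀ X ∈ A, ∃ W X', W ∈ ω ∧ X' ∈ A ∧ SES X W X'

/-- `ν` is a relative generator in `ω`: `ν ⊆ ω` and every `W ∈ ω` fits in a short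
exact sequence `0 → W' → V → W → 0` with `V ∈ ν`, `W' ∈ ω`. -/
def IsRelativeGenerator (ν ω : Set C) : Prop :=
  ν ⊆ ω ∧ ∀ W ∈ ω, ∃ V W', V ∈ ν ∧ W' ∈ ω ∧ SES W' V W

/-- The objects of `B`-resolution dimension at most `n` (the class `B^∧_n`). -/
def ResDimLE (B : Set C) : ℕ → Set C
  | 0 => {X | ∃ B₀ ∈ B, Nonempty (X ≅ B₀)}
  | (n + 1) => ResDimLE B n ∪ {X | ∃ K B₀, K ∈ ResDimLE B n ∧ B₀ ∈ B ∧ SES K B₀ X}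

/-- The class `B^∧` of objects of finite `B`-resolution dimension. -/
def ResFin (B : Set C) : Set C := {X | ∃ n, X ∈ ResDimLE B n}

/-- The `B`-resolution dimension of an object, valued in `ℕ∞`. -/
noncomputable def resDim (B : Set C) (X : C) : ℕ∞ :=
  sInf ((fun n : ℕ => (n : ℕ∞)) '' {n | X ∈ ResDimLE B n})

/-- The objects of `B`-coresolution dimension at most `n` (the class `B^∨_n`). -/
def CoresDimLE (B : Set C) : ℕ → Set C
  | 0 => {X | ∃ B₀ ∈ B, Nonempty (X ≅ B₀)}
  | (n + 1) => CoresDimLE B n ∪ {X | ∃ B₀ K, B₀ ∈ B ∧ K ∈ CoresDimLE B n ∧ SES X B₀ K}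

/-- The `B`-coresolution dimension of an object, valued in `ℕ∞`. -/
noncomputable def coresDim (B : Set C) (X : C) : ℕ∞ :=
  sInf ((fun n : ℕ => (n : ℕ∞)) '' {n | X ∈ CoresDimLE B n})

/-- The class of `(𝒳, 𝒴)`-Gorenstein projective objects: 0-th cycles of exact,
`Hom(-, 𝒴)`-acyclic complexes with components in `𝒳`. -/
def GorensteinProj (𝒳 𝒴 : Set C) : Set C :=
  {M | ∃ K : ChainComplex C ℤ,
    (∀ m : ℤ, K.X m ∈ 𝒳) ∧
    (∀ m : ℤ, K.ExactAt m) ∧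
    (∀ Y₀ ∈ 𝒴, ∀ m : ℤ, ∀ f : K.X m ⟶ Y₀, K.d (m + 1) m ≫ f = 0 →
      ∃ g : K.X (m - 1) ⟶ Y₀, K.d m (m - 1) ≫ g = f) ∧
    Nonempty (M ≅ K.cycles 0)}

section HasExt

variable [HasExt.{w} C]

/-- `Ext¹(A, B) = 0`. -/
def ext1Zero (A B : C) : Prop := Subsingleton (Abelian.Ext.{w} A B 1)

/-- `Extⁱ(A, B) = 0` for all `i ≥ 1`. -/
def extVanish (A B : C) : Prop := ∀ i : ℕ, 1 ≤ i → Subsingleton (Abelian.Ext.{w} A B i)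

/-- `Extⁱ(X, Y) = 0` for all `i ≥ 1`, `X ∈ 𝒜`, `Y ∈ ℬ`. -/
def ExtPairVanish (𝒜 ℬ : Set C) : Prop := ∀ X ∈ 𝒜, ∀ Y ∈ ℬ, extVanish.{w} X Y

/-- The right `Ext¹`-orthogonal complement `𝒜^{⊥1}`. -/
def rightPerp1 (𝒜 : Set C) : Set C := {N | ∀ X ∈ 𝒜, ext1Zero.{w} X N}

/-- The total right orthogonal complement `𝒜^{⊥}`. -/
def rightPerp (𝒜 : Set C) : Set C := {N | ∀ X ∈ 𝒜, extVanish.{w} X N}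

/-- The left `Ext¹`-orthogonal complement `^{⊥1}ℬ`. -/
def leftPerp1 (ℬ : Set C) : Set C := {M | ∀ Y ∈ ℬ, ext1Zero.{w} M Y}

/-- `(𝒜, ℬ)` is a left cotorsion pair cut along `𝒮`. -/
def LeftCutCotorsion (𝒜 ℬ 𝒮 : Set C) : Prop :=
  ClosedUnderDirectSummands 𝒜 ∧ 𝒜 ∩ 𝒮 = leftPerp1.{w} ℬ ∩ 𝒮

/-- `(𝒜, ℬ)` is a complete left cotorsion pair cut along `𝒮`. -/
def CompleteLeftCutCotorsion (𝒜 ℬ 𝒮 : Set C) : Prop :=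
  LeftCutCotorsion.{w} 𝒜 ℬ 𝒮 ∧ ∀ S ∈ 𝒮, ∃ B₀ A₀, B₀ ∈ ℬ ∧ A₀ ∈ 𝒜 ∧ SES B₀ A₀ S

/-- `(𝒜, ℬ)` is a right cotorsion pair cut along `𝒮`. -/
def RightCutCotorsion (𝒜 ℬ 𝒮 : Set C) : Prop :=
  ClosedUnderDirectSummands ℬ ∧ ℬ ∩ 𝒮 = rightPerp1.{w} 𝒜 ∩ 𝒮

/-- `(𝒜, ℬ)` is a complete right cotorsion pair cut along `𝒮`. -/
def CompleteRightCutCotorsion (𝒜 ℬ 𝒮 : Set C) : Prop :=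
  RightCutCotorsion.{w} 𝒜 ℬ 𝒮 ∧ ∀ S ∈ 𝒮, ∃ B₀ A₀, B₀ ∈ ℬ ∧ A₀ ∈ 𝒜 ∧ SES S B₀ A₀

/-- `(𝒜, ℬ)` is a complete cotorsion pair cut along `𝒮`. -/
def CompleteCutCotorsion (𝒜 ℬ 𝒮 : Set C) : Prop :=
  CompleteLeftCutCotorsion.{w} 𝒜 ℬ 𝒮 ∧ CompleteRightCutCotorsion.{w} 𝒜 ℬ 𝒮

/-- `(𝒜, ℬ)` is a complete left cotorsion pair in `C`. -/
def CompleteLeftCotorsionPair (𝒜 ℬ : Set C) : Prop :=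
  𝒜 = leftPerp1.{w} ℬ ∧ ∀ X : C, ∃ B₀ A₀, B₀ ∈ ℬ ∧ A₀ ∈ 𝒜 ∧ SES B₀ A₀ X

/-- `(𝒜, ℬ)` is a complete cotorsion pair in `C`. -/
def CompleteCotorsionPair (𝒜 ℬ : Set C) : Prop :=
  CompleteLeftCotorsionPair.{w} 𝒜 ℬ ∧ ℬ = rightPerp1.{w} 𝒜 ∧
    ∀ X : C, ∃ B₀ A₀, B₀ ∈ ℬ ∧ A₀ ∈ 𝒜 ∧ SES X B₀ A₀

/-- `(𝒳, ω)` is a left Frobenius pair in `C`. -/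
def LeftFrobenius (𝒳 ω : Set C) : Prop :=
  LeftThick 𝒳 ∧ ClosedUnderDirectSummands ω ∧
    ExtPairVanish.{w} 𝒳 ω ∧ IsRelativeCogenerator ω 𝒳

/-- `(𝒳, ω)` is a left Frobenius pair cut along `𝒮`. -/
def LeftFrobeniusCutAlong (𝒳 ω 𝒮 : Set C) : Prop :=
  LeftThick 𝒳 ∧
  LeftFrobenius.{w} (𝒳 ∩ 𝒮) (ω ∩ 𝒮) ∧
  (ExtPairVanish.{w} (ω ∩ 𝒮) ω ∧ IsRelativeGenerator (ω ∩ 𝒮) ω) ∧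
  (ClosedUnderExtensions ω ∧ ClosedUnderDirectSummands ω)

/-- `(𝒜, ℬ)` is a left weak AB context in `C`. -/
def LeftWeakABContext (𝒜 ℬ : Set C) : Prop :=
  LeftFrobenius.{w} 𝒜 (𝒜 ∩ ℬ) ∧ RightThick ℬ ∧ ℬ ⊆ ResFin 𝒜

/-- `(𝒜, ℬ)` is a left weak AB context cut along `𝒮`. -/
def LeftWeakABContextCutAlong (𝒜 ℬ 𝒮 : Set C) : Prop :=
  LeftFrobeniusCutAlong.{w} 𝒜 (𝒜 ∩ ℬ) 𝒮 ∧ RightThick (ℬ ∩ 𝒮) ∧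
    ℬ ∩ 𝒮 ⊆ ResFin (𝒜 ∩ 𝒮)

/-- `(𝒳, 𝒴)` is a GP-admissible pair. -/
def GPAdmissible (𝒳 𝒴 : Set C) : Prop :=
  ExtPairVanish.{w} 𝒳 𝒴 ∧
  (∀ M : C, ∃ X₀, X₀ ∈ 𝒳 ∧ ∃ p : X₀ ⟶ M, Epi p) ∧
  ClosedUnderBinaryCoproducts 𝒳 ∧ ClosedUnderBinaryCoproducts 𝒴 ∧
  ClosedUnderExtensions 𝒳 ∧
  IsRelativeCogenerator (𝒳 ∩ 𝒴) 𝒳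

/-- The class `ℰ_l(𝒜, ℬ)` of objects admitting a suitable left approximation. -/
def EClassLeft (𝒜 ℬ : Set C) : Set C :=
  {X | ∃ B₀ A₀, B₀ ∈ ℬ ∧ A₀ ∈ 𝒜 ∧ SES B₀ A₀ X}

/-- The maximal left cotorsion cut `𝕊_l(𝒜, ℬ)`. -/
def MaxLeftCut (𝒜 ℬ : Set C) : Set C :=
  ⋃₀ {𝒮 | CompleteLeftCutCotorsion.{w} 𝒜 ℬ 𝒮}

/-- `pd(M) ≤ n`, via vanishing of `Ext` in degrees `> n`. -/
def pdLE (M : C) (n : ℕ) : Prop :=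
  ∀ i : ℕ, n < i → ∀ N : C, Subsingleton (Abelian.Ext.{w} M N i)

/-- The projective dimension of an object, valued in `ℕ∞`. -/
noncomputable def pd (M : C) : ℕ∞ :=
  sInf ((fun n : ℕ => (n : ℕ∞)) '' {n | pdLE.{w} M n})

/-- The projective dimension of a class of objects. -/
noncomputable def pdClass (𝒜 : Set C) : ℕ∞ := ⨆ M ∈ 𝒜, pd.{w} M

/-- The `𝔓_𝒮`-condition of the second correspondence theorem. -/
def PPair (𝒮 ℱ 𝒢 : Set C) : Prop :=
  CompleteCutCotorsion.{w} ℱ 𝒢 (ThickClosure ℱ) ∧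
  ExtPairVanish.{w} ℱ 𝒢 ∧
  IsRelativeGenerator (ℱ ∩ 𝒢 ∩ 𝒮) (ℱ ∩ 𝒢) ∧
  IsRelativeCogenerator (ℱ ∩ 𝒢 ∩ 𝒮) (ℱ ∩ 𝒢)

end HasExt

/-- The class of projective objects of `C`. -/
def ProjClass (C : Type u) [Category.{v} C] : Set C := {P : C | Projective P}

section HasExt
variable (C) [HasExt.{w} C]

/-- The finitistic dimension of `C`. -/
noncomputable def Findim : ℕ∞ := pdClass.{w} (ResFin (ProjClass C))

end HasExt

/-!
Write `𝒳^⊥` for `rightPerp 𝒳`; it contains `ω` and `0` and is closed under direct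
summands and cokernels of monomorphisms. By induction on the `𝒳`-resolution dimension
(the Auslander–Buchweitz argument), every `S ∈ 𝒳^∧_n` has approximations
`0 → K → X → S → 0` and `0 → S → H → X' → 0` with `X, X' ∈ 𝒳` and `K, H ∈ 𝒳^⊥`.
The second comes from the first by embedding `X` into some `W ∈ ω` and passing to `W/K`;
the first for `S` comes from the second for the kernel of an epimorphism `X₀ → S` by a
pushout. If `S` is moreover `Ext¹`-orthogonal to `𝒳^⊥` (resp. to `𝒳`), the first
(resp. second) approximation splits, so `S` is a direct summand of `X` (resp. of `H`).
-/

namespace SES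

variable {X Y Z : C}

lemma of_shortExact {S : ShortComplex C} (hS : S.ShortExact) : SES S.X₁ S.X₂ S.X₃ :=
  ⟨S.f, S.g, S.zero, hS⟩

lemma of_iso {X' Z' : C} (h : SES X Y Z) (e₁ : X' ≅ X) (e₃ : Z ≅ Z') : SES X' Y Z' := by
  obtain ⟨f, g, w, hS⟩ := h
  refine ⟨e₁.hom ≫ f, g ≫ e₃.hom, by simp [reassoc_of% w],
    ShortComplex.shortExact_of_iso ?_ hS⟩
  exact ShortComplex.isoMk e₁.symm (Iso.refl _) e₃

lemma cokernel (f : X ⟶ Y) [Mono f] : SES X Y (cokernel f) :=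
  of_shortExact (S := ShortComplex.mk f (cokernel.π f) (cokernel.condition f))
    (.mk' (ShortComplex.exact_of_g_is_cokernel _ (cokernelIsCokernel f)) inferInstance
      inferInstance)

lemma zero_of_iso (e : Y ≅ Z) : SES 0 Y Z :=
  (cokernel (0 : (0 : C) ⟶ Y)).of_iso (Iso.refl _) (cokernelZeroIsoTarget ≪≫ e)

lemma kernel (g : Y ⟶ Z) [Epi g] : SES (kernel g) Y Z :=
  of_shortExact (S := ShortComplex.mk (kernel.ι g) g (kernel.condition g))
    (.mk' (ShortComplex.exact_of_f_is_kernel _ (kernelIsKernel g)) inferInstance inferInstance)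

end SES

namespace ShortExact

variable {S : ShortComplex C} (hS : S.ShortExact)

include hS

lemma ses_of_isPushout {D P : C} {u : S.X₁ ⟶ D} {i : S.X₂ ⟶ P} {j : D ⟶ P}
    (hP : IsPushout S.f u i j) : SES D P S.X₃ := by
  have := hS.mono_f
  have := hS.epi_g
  have : Mono j := MorphismProperty.of_isPushout (P := .monomorphisms C) hP.flip ‹Mono S.f›
  have := isIso_cokernel_map_of_isPushout hP
  exact (SES.cokernel j).of_iso (Iso.refl _) ((asIso (cokernel.map _ _ _ _ hP.w)).symm ≪≫
    (hS.exact.gIsCokernel.coconePointUniqueUpToIso (cokernelIsCokernel S.f)).symm)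

lemma ses_of_isPushout_of_mono {W P : C} {m : S.X₂ ⟶ W} {i : W ⟶ P} {j : S.X₃ ⟶ P}
    [Mono m] (hP : IsPushout m S.g i j) : SES S.X₁ W P := by
  have := hS.mono_f
  have := hS.epi_g
  have := hP.epi_inl_of_epi
  let κ := kernel.map _ _ _ _ hP.flip.w
  have : Epi κ := Abelian.epi_kernel_map_of_isPushout hP.flip
  have : Mono κ := mono_of_mono_fac (kernel.lift_ι _ _ _)
  have : IsIso κ := isIso_of_mono_of_epi κ
  exact (SES.kernel i).of_iso
    (hS.exact.fIsKernel.conePointUniqueUpToIso (kernelIsKernel S.g) ≪≫ asIso κ) (Iso.refl _)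

end ShortExact

namespace SES

variable {K X₀ S : C}

lemma exists_amalgam {H X' : C} (h₁ : SES K H X') (h₂ : SES K X₀ S) :
    ∃ P, SES X₀ P X' ∧ SES H P S := by
  obtain ⟨f₁, _, _, hS₁⟩ := h₁
  obtain ⟨f₂, _, _, hS₂⟩ := h₂
  have hP := IsPushout.of_hasPushout f₁ f₂
  exact ⟨_, ShortExact.ses_of_isPushout hS₁ hP, ShortExact.ses_of_isPushout hS₂ hP.flip⟩

lemma exists_quotient {W X' : C} (h₁ : SES K X₀ S) (h₂ : SES X₀ W X') :
    ∃ P, SES S P X' ∧ SES K W P := by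
  obtain ⟨_, g, _, hS₁⟩ := h₁
  obtain ⟨m, _, _, hS₂⟩ := h₂
  have := hS₂.mono_f
  have hP := IsPushout.of_hasPushout m g
  exact ⟨_, ShortExact.ses_of_isPushout hS₂ hP, ShortExact.ses_of_isPushout_of_mono hS₁ hP⟩

end SES

section Ext

variable [HasExt.{w} C]

lemma subsingleton_ext_of_retract {X Y Z : C} {n : ℕ} (i : Y ⟶ Z) (r : Z ⟶ Y)
    (hir : i ≫ r = 𝟙 Y) [Subsingleton (Ext.{w} X Z n)] : Subsingleton (Ext.{w} X Y n) := by
  refine ⟨fun a b => ?_⟩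
  have hfactor (c : Ext.{w} X Y n) :
      c = (c.comp (Ext.mk₀ i) (add_zero n)).comp (Ext.mk₀ r) (add_zero n) := by
    rw [Ext.comp_assoc_of_third_deg_zero, Ext.mk₀_comp_mk₀, hir, Ext.comp_mk₀_id]
  rw [hfactor a, hfactor b, Subsingleton.elim (a.comp (Ext.mk₀ i) (add_zero n))]

lemma ShortExact.subsingleton_ext_X₃ {S : ShortComplex C} (hS : S.ShortExact) (X : C) (n : ℕ)
    [Subsingleton (Ext.{w} X S.X₂ n)] [Subsingleton (Ext.{w} X S.X₁ (n + 1))] :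
    Subsingleton (Ext.{w} X S.X₃ n) := by
  refine subsingleton_of_forall_eq 0 fun x => ?_
  obtain ⟨y, rfl⟩ := Ext.covariant_sequence_exact₃ X hS x rfl (Subsingleton.elim _ _)
  rw [Subsingleton.elim y 0, Ext.zero_comp]

lemma ShortExact.exists_retraction {S : ShortComplex C} (hS : S.ShortExact)
    [Subsingleton (Ext.{w} S.X₃ S.X₁ 1)] :
    ∃ r : S.X₂ ⟶ S.X₁, S.f ≫ r = 𝟙 S.X₁ := by
  obtain ⟨y, hy⟩ := Ext.contravariant_sequence_exact₁ hS S.X₁ (Ext.mk₀ (𝟙 S.X₁))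
    (add_zero 1) (Subsingleton.elim _ _)
  obtain ⟨r, rfl⟩ := (Ext.mk₀_bijective S.X₂ S.X₁).2 y
  exact ⟨r, (Ext.mk₀_bijective _ _).1 (by rwa [Ext.mk₀_comp_mk₀] at hy)⟩

lemma SES.retract_left {X Y Z : C} (h : SES X Y Z) (hext : ext1Zero.{w} Z X) :
    ∃ (i : X ⟶ Y) (r : Y ⟶ X), i ≫ r = 𝟙 X := by
  obtain ⟨f, _, _, hS⟩ := h
  have : Subsingleton (Ext.{w} Z X 1) := hext
  obtain ⟨r, hr⟩ := ShortExact.exists_retraction hS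
  exact ⟨f, r, hr⟩

lemma SES.retract_right {X Y Z : C} (h : SES X Y Z) (hext : ext1Zero.{w} Z X) :
    ∃ (i : Z ⟶ Y) (r : Y ⟶ Z), i ≫ r = 𝟙 Z := by
  obtain ⟨_, g, _, hS⟩ := h
  have : Subsingleton (Ext.{w} Z X 1) := hext
  obtain ⟨r, hr⟩ := ShortExact.exists_retraction hS
  let σ := ShortComplex.Splitting.ofExactOfRetraction _ hS.exact r hr hS.epi_g
  exact ⟨σ.s, g, σ.s_g⟩

variable (𝒜 : Set C)

lemma rightPerp_closedUnderDirectSummands : ClosedUnderDirectSummands (rightPerp.{w} 𝒜) :=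
  fun _ _ i r hir hY X hX n hn =>
    have := hY X hX n hn
    subsingleton_ext_of_retract i r hir

lemma zero_mem_rightPerp : (0 : C) ∈ rightPerp.{w} 𝒜
  | X, _, n + 1, _ => Ext.subsingleton_of_injective X 0 n

lemma rightPerp_closedUnderMonoCokernels : ClosedUnderMonoCokernels (rightPerp.{w} 𝒜) := by
  rintro K W H ⟨_, _, _, hS⟩ hK hW X hX n hn
  have := hW X hX n hn
  have := hK X hX (n + 1) (by omega)
  exact ShortExact.subsingleton_ext_X₃ hS X n

lemma rightPerp_subset_rightPerp1 : rightPerp.{w} 𝒜 ⊆ rightPerp1.{w} 𝒜 :=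
  fun _ hN X hX => hN X hX 1 le_rfl

lemma subset_leftPerp1_rightPerp : 𝒜 ⊆ leftPerp1.{w} (rightPerp.{w} 𝒜) :=
  fun X hX _ hN => hN X hX 1 le_rfl

variable {𝒜} {ℬ 𝒮 : Set C}

lemma completeLeftCutCotorsion_of_subset_eClassLeft (h𝒜 : ClosedUnderDirectSummands 𝒜)
    (h𝒜ℬ : 𝒜 ⊆ leftPerp1.{w} ℬ) (happrox : 𝒮 ⊆ EClassLeft 𝒜 ℬ) :
    CompleteLeftCutCotorsion.{w} 𝒜 ℬ 𝒮 := by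
  refine ⟨⟨h𝒜, Set.Subset.antisymm (Set.inter_subset_inter_left _ h𝒜ℬ) ?_⟩, happrox⟩
  rintro S ⟨hS, hS𝒮⟩
  obtain ⟨B, A, hB, hA, hBAS⟩ := happrox hS𝒮
  obtain ⟨i, r, hir⟩ := hBAS.retract_right (hS B hB)
  exact ⟨h𝒜 i r hir hA, hS𝒮⟩

lemma completeRightCutCotorsion_of_forall_ses (hℬ : ClosedUnderDirectSummands ℬ)
    (h𝒜ℬ : ℬ ⊆ rightPerp1.{w} 𝒜)
    (happrox : ∀ S ∈ 𝒮, ∃ B A, B ∈ ℬ ∧ A ∈ 𝒜 ∧ SES S B A) :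
    CompleteRightCutCotorsion.{w} 𝒜 ℬ 𝒮 := by
  refine ⟨⟨hℬ, Set.Subset.antisymm (Set.inter_subset_inter_left _ h𝒜ℬ) ?_⟩, happrox⟩
  rintro S ⟨hS, hS𝒮⟩
  obtain ⟨B, A, hB, hA, hSBA⟩ := happrox S hS𝒮
  obtain ⟨i, r, hir⟩ := hSBA.retract_left (hS A hA)
  exact ⟨hℬ i r hir hB, hS𝒮⟩

namespace LeftFrobenius

variable {𝒳 ω : Set C} (h : LeftFrobenius.{w} 𝒳 ω)
include h

lemma subset_rightPerp : ω ⊆ rightPerp.{w} 𝒳 :=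
  fun W hW X hX => h.2.2.1 X hX W hW

lemma exists_ses_rightPerp {S : C} (hS : S ∈ EClassLeft 𝒳 (rightPerp.{w} 𝒳)) :
    ∃ H X', H ∈ rightPerp.{w} 𝒳 ∧ X' ∈ 𝒳 ∧ SES S H X' := by
  obtain ⟨K, X₀, hK, hX₀, hKX₀S⟩ := hS
  obtain ⟨W, X', hW, hX', hX₀WX'⟩ := h.2.2.2.2 X₀ hX₀
  obtain ⟨H, hSHX', hKWH⟩ := hKX₀S.exists_quotient hX₀WX'
  have hH := rightPerp_closedUnderMonoCokernels 𝒳 hKWH hK (h.subset_rightPerp hW)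
  exact ⟨H, X', hH, hX', hSHX'⟩

lemma resDimLE_subset_eClassLeft (n : ℕ) :
    ResDimLE 𝒳 n ⊆ EClassLeft 𝒳 (rightPerp.{w} 𝒳) := by
  induction n with
  | zero =>
    rintro S ⟨X₀, hX₀, ⟨e⟩⟩
    exact ⟨0, X₀, zero_mem_rightPerp 𝒳, hX₀, SES.zero_of_iso e.symm⟩
  | succ n ih =>
    rintro S (hS | ⟨K, X₀, hK, hX₀, hKX₀S⟩)
    · exact ih hS
    · obtain ⟨H, X', hH, hX', hKHX'⟩ := h.exists_ses_rightPerp (ih hK)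
      obtain ⟨P, hX₀PX', hHPS⟩ := hKHX'.exists_amalgam hKX₀S
      exact ⟨H, P, hH, h.1.1 hX₀PX' hX₀ hX', hHPS⟩

end LeftFrobenius

end Ext

/-- Proposition 2.7 (2). For a left Frobenius pair `(𝒳, ω)` and every
`n ≥ 0`, the pair `(𝒳, 𝒳^⊥)` is a complete cotorsion pair cut along `𝒳^∧_n`. -/
theorem leftFrobenius_completeCutCotorsion_resDimLE
    {C : Type u} [CategoryTheory.Category.{v} C] [CategoryTheory.Abelian C]
    [CategoryTheory.HasExt.{w} C]
    (𝒳 ω : Set C) (h : LeftFrobenius.{w} 𝒳 ω) :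
    ∀ n : ℕ, CompleteCutCotorsion.{w} 𝒳 (rightPerp.{w} 𝒳) (ResDimLE 𝒳 n) := by
  intro n
  have happrox := h.resDimLE_subset_eClassLeft n
  exact ⟨completeLeftCutCotorsion_of_subset_eClassLeft h.1.2.2 (subset_leftPerp1_rightPerp 𝒳)
      happrox,
    completeRightCutCotorsion_of_forall_ses (rightPerp_closedUnderDirectSummands 𝒳)
      (rightPerp_subset_rightPerp1 𝒳) fun _ hS => h.exists_ses_rightPerp (happrox hS)⟩

end CutPaper
end

section
/- Let ω and 𝒮 be classes of objects of an abelian category 𝒞 such that ω is closed under extensions and ω ∩ 𝒮 is an ω-projective relative generator in ω. Then: (1) ω ∩ 𝒮 is an ω^∧-projective relative generator in ω^∧; moreover, for any C ∈ ω^∧ with resdim_ω(C) ≥ 1 there exists a short exact sequence 0 → K → F → C → 0 with F ∈ ω ∩ 𝒮 and resdim_ω(K) = resdim_ω(C) − 1; (2) ω^∧ is closed under extensions; (3) if ω is closed under direct summands, then so is ω^∧; (4) if ω is closed under isomorphisms and 𝒮 is closed under kernels of epimorphisms between its objects and cokernels of monomorphisms between its objects, then ω^∧ ∩ 𝒮 =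 (ω ∩ 𝒮)^∧. -/
namespace CutPaper

open CategoryTheory CategoryTheory.Limits CategoryTheory.Abelian ZeroObject

universe w v u

variable {C : Type u} [Category.{v} C] [Abelian C]

/-!
Write `ν = ω ∩ 𝒮`. Composing a resolution of `X ∈ ω^∧_n` with a `ν`-cover of its first term
presents `X` as a quotient of an object of `ν` by an object of `ω^∧_{n-1}`, and dimension
shifting gives `Ext^{≥1}(ν, ω^∧) = 0`. By this vanishing, a `ν`-cover of the right end of a
short exact sequence lifts to the middle term, and the horseshoe construction presents the
middle term as a quotient of `(left end) ⊞ V`; induction on resolution dimensions then shows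
that `ω^∧` contains the cokernels of monomorphisms between its objects, hence its extensions.
For summands, Schanuel's lemma compares a cover `V ⟶ X ⊞ Z` with the sum of the covers of `X`
and `Z` it induces, exhibiting the syzygy of `X` as a summand of an object of smaller
dimension. Finally, a nonempty class closed under kernels of epimorphisms and cokernels of
monomorphisms contains `0`, hence is closed under isomorphisms, so the resolutions above stay
inside `𝒮`.
-/

section ShortExactSequences

variable {C : Type u} [Category.{v} C] [Abelian C]

lemma SES.of_iso_s10 {X Y Z X' Y' Z' : C} (h : SES X Y Z) (eX : X ≅ X') (eY : Y ≅ Y')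
    (eZ : Z ≅ Z') : SES X' Y' Z' := by
  obtain ⟨f, g, w, hS⟩ := h
  refine ⟨eX.inv ≫ f ≫ eY.hom, eY.inv ≫ g ≫ eZ.hom, by simp [reassoc_of% w], ?_⟩
  exact ShortComplex.shortExact_of_iso
    (ShortComplex.isoMk (S₁ := ShortComplex.mk f g w) eX eY eZ (by simp) (by simp)) hS

lemma SES.of_splitting {S : ShortComplex C} (s : S.Splitting) : SES S.X₁ S.X₂ S.X₃ :=
  ⟨S.f, S.g, S.zero, s.shortExact⟩

lemma SES.biprod (X Y : C) : SES X (X ⊞ Y) Y :=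
  .of_splitting (.ofHasBinaryBiproduct X Y)

lemma SES.biprod_symm (X Y : C) : SES Y (X ⊞ Y) X :=
  (SES.biprod Y X).of_iso_s10 (Iso.refl _) (biprod.braiding Y X) (Iso.refl _)

lemma SES.zero_left {X Y : C} (e : X ≅ Y) : SES 0 X Y :=
  .of_splitting (S := ShortComplex.mk (0 : 0 ⟶ X) e.hom zero_comp)
    { r := 0, s := e.inv, f_r := (isZero_zero C).eq_of_src _ _, s_g := e.inv_hom_id,
      id := by simp }

lemma SES.biprod_map {X Y Z X' Y' Z' : C} (h : SES X Y Z) (h' : SES X' Y' Z') :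
    SES (X ⊞ X') (Y ⊞ Y') (Z ⊞ Z') := by
  obtain ⟨f, g, w, hS⟩ := h
  obtain ⟨f', g', w', hS'⟩ := h'
  have : Mono f := hS.mono_f
  have : Mono f' := hS'.mono_f
  have : Epi g := hS.epi_g
  have : Epi g' := hS'.epi_g
  refine ⟨biprod.map f f', biprod.map g g', by ext <;> simp [w, w'], .mk' ?_ inferInstance
    inferInstance⟩
  rw [ShortComplex.exact_iff_exact_up_to_refinements]
  intro A y hy
  have h₁ : (y ≫ biprod.fst) ≫ g = 0 := by simpa using hy =≫ biprod.fst
  have h₂ : (y ≫ biprod.snd) ≫ g' = 0 := by simpa using hy =≫ biprod.snd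
  refine ⟨A, 𝟙 A, inferInstance,
    biprod.lift (hS.exact.lift _ h₁) (hS'.exact.lift _ h₂), ?_⟩
  ext
  · simpa using (hS.exact.lift_f _ h₁).symm
  · simpa using (hS'.exact.lift_f _ h₂).symm

lemma SES.of_pullback {X Y Z T : C} {f : X ⟶ Y} {g : Y ⟶ Z} {w : f ≫ g = 0}
    (hS : (ShortComplex.mk f g w).ShortExact) (h : T ⟶ Z) : SES X (pullback g h) T := by
  have : Mono f := hS.mono_f
  have : Epi g := hS.epi_g
  let ι : X ⟶ pullback g h := pullback.lift f 0 (by simp [w])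
  have hι : ι ≫ pullback.fst g h = f := pullback.lift_fst _ _ _
  have hι' : ι ≫ pullback.snd g h = 0 := pullback.lift_snd _ _ _
  have : Mono ι := mono_of_mono_fac hι
  refine ⟨ι, pullback.snd g h, hι', .mk' ?_ inferInstance inferInstance⟩
  rw [ShortComplex.exact_iff_exact_up_to_refinements]
  intro A y hy
  have hy' : (y ≫ pullback.fst g h) ≫ g = 0 := by
    rw [Category.assoc, pullback.condition, ← Category.assoc, hy, zero_comp]
  refine ⟨A, 𝟙 A, inferInstance, hS.exact.lift _ hy', ?_⟩
  apply pullback.hom_ext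
  · simpa [hι] using (hS.exact.lift_f _ hy').symm
  · simpa [hι'] using hy

lemma SES.pullback {X Y X' Y' Z : C} (h : SES X Y Z) (h' : SES X' Y' Z) :
    ∃ P, SES X P Y' ∧ SES X' P Y := by
  obtain ⟨f, g, w, hS⟩ := h
  obtain ⟨f', g', w', hS'⟩ := h'
  exact ⟨_, .of_pullback hS g',
    (SES.of_pullback hS' g).of_iso_s10 (Iso.refl _) (pullbackSymmetry g' g) (Iso.refl _)⟩

lemma SES.comp {K V M X Y : C} (h : SES K V M) (h' : SES X M Y) :
    ∃ L, SES K L X ∧ SES L V Y := by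
  obtain ⟨k, p, wp, hT⟩ := h
  obtain ⟨x, q, wq, hU⟩ := h'
  have : Epi p := hT.epi_g
  have : Mono x := hU.mono_f
  have : Epi q := hU.epi_g
  refine ⟨_, .of_pullback hT x, pullback.fst p x, p ≫ q, ?_, .mk' ?_ inferInstance
    inferInstance⟩
  · rw [← Category.assoc, pullback.condition, Category.assoc, wq, comp_zero]
  rw [ShortComplex.exact_iff_exact_up_to_refinements]
  intro A v hv
  have hv' : (v ≫ p) ≫ q = 0 := by simpa using hv
  exact ⟨A, 𝟙 A, inferInstance,
    pullback.lift v (hU.exact.lift _ hv') (hU.exact.lift_f _ hv').symm,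
    by simpa using (pullback.lift_fst _ _ _).symm⟩

end ShortExactSequences

section ExtVanishing

variable {C : Type u} [Category.{v} C] [Abelian C] [HasExt.{w} C]

lemma SES.nonempty_iso_biprod {X Y Z : C} (h : SES X Y Z)
    (hZX : Subsingleton (Abelian.Ext.{w} Z X 1)) : Nonempty (Y ≅ X ⊞ Z) := by
  obtain ⟨f, g, w, hS⟩ := h
  obtain ⟨σ, hσ⟩ := Ext.covariant_sequence_exact₃ Z hS (Ext.mk₀ (𝟙 Z)) (zero_add 1)
    (Subsingleton.elim _ _)
  obtain ⟨s, rfl⟩ := (Ext.mk₀_bijective Z Y).2 σ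
  have hs : s ≫ g = 𝟙 Z :=
    (Ext.mk₀_bijective Z Z).1 (by simpa [Ext.mk₀_comp_mk₀] using hσ)
  exact ⟨(ShortComplex.Splitting.ofExactOfSection _ hS.exact s hs hS.mono_f).isoBinaryBiproduct⟩

lemma SES.schanuel {K P K' P' Y : C} (h : SES K P Y) (h' : SES K' P' Y)
    (hP'K : Subsingleton (Abelian.Ext.{w} P' K 1)) (hPK' : Subsingleton (Abelian.Ext.{w} P K' 1)) :
    Nonempty (K ⊞ P' ≅ K' ⊞ P) := by
  obtain ⟨Q, hQ, hQ'⟩ := h.pullback h'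
  obtain ⟨e⟩ := hQ.nonempty_iso_biprod hP'K
  obtain ⟨e'⟩ := hQ'.nonempty_iso_biprod hPK'
  exact ⟨e.symm ≪≫ e'⟩

lemma SES.horseshoe {X Y Z K V : C} (h : SES X Y Z) (h' : SES K V Z)
    (hVX : Subsingleton (Abelian.Ext.{w} V X 1)) : SES K (X ⊞ V) Y := by
  obtain ⟨Q, hQ, hQ'⟩ := h.pullback h'
  obtain ⟨e⟩ := hQ.nonempty_iso_biprod hVX
  exact hQ'.of_iso_s10 (Iso.refl _) e (Iso.refl _)

lemma extVanish_of_retract {V X Y : C} {i : X ⟶ Y} {r : Y ⟶ X} (hir : i ≫ r = 𝟙 X)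
    (h : extVanish.{w} V Y) : extVanish.{w} V X := by
  intro n hn
  have := h n hn
  refine ⟨fun a b => ?_⟩
  have hfac : ∀ α : Abelian.Ext.{w} V X n,
      α = (α.comp (Ext.mk₀ i) (add_zero n)).comp (Ext.mk₀ r) (add_zero n) := by
    intro α
    rw [Ext.comp_assoc_of_third_deg_zero, Ext.mk₀_comp_mk₀, hir, Ext.comp_mk₀_id]
  rw [hfac a, hfac b, Subsingleton.elim (a.comp (Ext.mk₀ i) _) (b.comp (Ext.mk₀ i) _)]

lemma extVanish_of_iso {V X Y : C} (e : X ≅ Y) (h : extVanish.{w} V Y) : extVanish.{w} V X :=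
  extVanish_of_retract e.hom_inv_id h

lemma extVanish_middle_of_ses {V X₁ X₂ X₃ : C} (h : SES X₁ X₂ X₃)
    (h₁ : extVanish.{w} V X₁) (h₃ : extVanish.{w} V X₃) : extVanish.{w} V X₂ := by
  obtain ⟨f, g, w, hS⟩ := h
  intro n hn
  have := h₁ n hn
  have := h₃ n hn
  suffices ∀ α : Abelian.Ext.{w} V X₂ n, α = 0 from ⟨fun a b => by rw [this a, this b]⟩
  intro α
  obtain ⟨α₁, rfl⟩ := Ext.covariant_sequence_exact₂ V hS α (Subsingleton.elim _ _)
  rw [Subsingleton.elim α₁ 0, Ext.zero_comp]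

lemma extVanish_right_of_ses {V X₁ X₂ X₃ : C} (h : SES X₁ X₂ X₃)
    (h₁ : extVanish.{w} V X₁) (h₂ : extVanish.{w} V X₂) : extVanish.{w} V X₃ := by
  obtain ⟨f, g, w, hS⟩ := h
  intro n hn
  have := h₂ n hn
  have := h₁ (n + 1) (by omega)
  suffices ∀ α : Abelian.Ext.{w} V X₃ n, α = 0 from ⟨fun a b => by rw [this a, this b]⟩
  intro α
  obtain ⟨α₂, rfl⟩ := Ext.covariant_sequence_exact₃ V hS α rfl (Subsingleton.elim _ _)
  rw [Subsingleton.elim α₂ 0, Ext.zero_comp]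

lemma subsingleton_ext_biprod {A B Y : C} {n : ℕ}
    (hA : Subsingleton (Abelian.Ext.{w} A Y n)) (hB : Subsingleton (Abelian.Ext.{w} B Y n)) :
    Subsingleton (Abelian.Ext.{w} (A ⊞ B) Y n) :=
  ⟨fun _ _ => Ext.biprod_ext (Subsingleton.elim _ _) (Subsingleton.elim _ _)⟩

end ExtVanishing

section ResolutionDimension

variable {C : Type u} [Category.{v} C] [Abelian C]

lemma mem_resDimLE_zero {B : Set C} {X : C} (h : X ∈ B) : X ∈ ResDimLE B 0 :=
  ⟨X, h, ⟨Iso.refl _⟩⟩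

lemma mem_resDimLE_succ {B : Set C} {K B₀ X : C} {n : ℕ} (h : SES K B₀ X)
    (hK : K ∈ ResDimLE B n) (hB₀ : B₀ ∈ B) : X ∈ ResDimLE B (n + 1) :=
  Or.inr ⟨K, B₀, hK, hB₀, h⟩

lemma resDimLE_mono {B : Set C} {n m : ℕ} (h : n ≤ m) : ResDimLE B n ⊆ ResDimLE B m := by
  induction h with
  | refl => exact subset_rfl
  | step _ ih => exact ih.trans Set.subset_union_left

lemma resDimLE_subset_of_subset {B B' : Set C} (h : B ⊆ B') (n : ℕ) :
    ResDimLE B n ⊆ ResDimLE B' n := by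
  induction n with
  | zero => exact fun X ⟨B₀, hB₀, e⟩ => ⟨B₀, h hB₀, e⟩
  | succ n ih =>
    rintro X (hX | ⟨K, B₀, hK, hB₀, hKX⟩)
    · exact Or.inl (ih hX)
    · exact mem_resDimLE_succ hKX (ih hK) (h hB₀)

lemma mem_resDimLE_of_iso {B : Set C} {X X' : C} {n : ℕ} (e : X ≅ X')
    (h : X ∈ ResDimLE B n) : X' ∈ ResDimLE B n := by
  cases n with
  | zero =>
    obtain ⟨B₀, hB₀, ⟨e'⟩⟩ := h
    exact ⟨B₀, hB₀, ⟨e.symm ≪≫ e'⟩⟩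
  | succ n =>
    rcases h with hX | ⟨K, B₀, hK, hB₀, hKX⟩
    · exact Or.inl (mem_resDimLE_of_iso e hX)
    · exact mem_resDimLE_succ (hKX.of_iso_s10 (Iso.refl _) (Iso.refl _) e) hK hB₀

variable {ω ν : Set C}

lemma mem_resDimLE_middle_of_ses (hext : ClosedUnderExtensions ω) {X Y Z : C} {m : ℕ}
    (h : SES X Y Z) (hX : X ∈ ω) (hZ : Z ∈ ResDimLE ω m) : Y ∈ ResDimLE ω m := by
  induction m generalizing Y Z with
  | zero =>
    obtain ⟨W, hW, ⟨e⟩⟩ := hZ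
    exact mem_resDimLE_zero (hext (h.of_iso_s10 (Iso.refl _) (Iso.refl _) e) hX hW)
  | succ m ih =>
    rcases hZ with hZ | ⟨K, W, hK, hW, hKZ⟩
    · exact resDimLE_mono m.le_succ (ih h hZ)
    · obtain ⟨P, hXP, hKP⟩ := h.pullback hKZ
      exact mem_resDimLE_succ hKP hK (hext hXP hX hW)

lemma biprod_mem_resDimLE (hext : ClosedUnderExtensions ω) {X V : C} {n : ℕ}
    (hX : X ∈ ResDimLE ω n) (hV : V ∈ ω) : (X ⊞ V) ∈ ResDimLE ω n :=
  mem_resDimLE_middle_of_ses hext (SES.biprod_symm X V) hV hX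

lemma exists_ses_of_mem_resDimLE (hext : ClosedUnderExtensions ω)
    (hgen : IsRelativeGenerator ν ω) {X : C} {n : ℕ} (hX : X ∈ ResDimLE ω n) :
    ∃ K V, V ∈ ν ∧ K ∈ ResDimLE ω (n - 1) ∧ SES K V X := by
  induction n generalizing X with
  | zero =>
    obtain ⟨W, hW, ⟨e⟩⟩ := hX
    obtain ⟨V, W', hV, hW', hW'W⟩ := hgen.2 W hW
    exact ⟨W', V, hV, mem_resDimLE_zero hW', hW'W.of_iso_s10 (Iso.refl _) (Iso.refl _) e.symm⟩
  | succ n ih =>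
    rcases hX with hX | ⟨K, W, hK, hW, hKX⟩
    · obtain ⟨K, V, hV, hK, hKX⟩ := ih hX
      exact ⟨K, V, hV, resDimLE_mono (by omega) hK, hKX⟩
    · obtain ⟨V, W', hV, hW', hW'W⟩ := hgen.2 W hW
      obtain ⟨L, hW'L, hLX⟩ := hW'W.comp hKX
      exact ⟨L, V, hV, mem_resDimLE_middle_of_ses hext hW'L hW' hK, hLX⟩

lemma isRelativeGenerator_resFin (hext : ClosedUnderExtensions ω)
    (hgen : IsRelativeGenerator ν ω) : IsRelativeGenerator ν (ResFin ω) := by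
  refine ⟨fun V hV => ⟨0, mem_resDimLE_zero (hgen.1 hV)⟩, fun X ⟨n, hX⟩ => ?_⟩
  obtain ⟨K, V, hV, hK, hKX⟩ := exists_ses_of_mem_resDimLE hext hgen hX
  exact ⟨V, K, hV, ⟨_, hK⟩, hKX⟩

variable {𝒮 : Set C}

lemma ClosedUnderMonoCokernels.mem_of_iso (hMC : ClosedUnderMonoCokernels 𝒮)
    (hEK : ClosedUnderEpiKernels 𝒮) {X Y : C} (e : X ≅ Y) (hX : X ∈ 𝒮) : Y ∈ 𝒮 :=
  hMC (SES.zero_left e) (hEK (SES.zero_left (Iso.refl X)) hX hX) hX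

lemma resDimLE_inter_subset (hEK : ClosedUnderEpiKernels 𝒮)
    (hMC : ClosedUnderMonoCokernels 𝒮) (n : ℕ) : ResDimLE (ω ∩ 𝒮) n ⊆ 𝒮 := by
  induction n with
  | zero => exact fun X ⟨V, hV, ⟨e⟩⟩ => hMC.mem_of_iso hEK e.symm hV.2
  | succ n ih =>
    rintro X (hX | ⟨K, V, hK, hV, hKX⟩)
    · exact ih hX
    · exact hMC hKX (ih hK) hV.2

lemma mem_resFin_inter (hext : ClosedUnderExtensions ω)
    (hgen : IsRelativeGenerator (ω ∩ 𝒮) ω)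
    (hEK : ClosedUnderEpiKernels 𝒮) (hMC : ClosedUnderMonoCokernels 𝒮) {X : C} {n : ℕ}
    (hX : X ∈ ResDimLE ω n) (hXS : X ∈ 𝒮) : X ∈ ResFin (ω ∩ 𝒮) := by
  induction n generalizing X with
  | zero =>
    obtain ⟨W, hW, ⟨e⟩⟩ := hX
    exact ⟨0, W, ⟨hW, hMC.mem_of_iso hEK e hXS⟩, ⟨e⟩⟩
  | succ n ih =>
    obtain ⟨K, V, hV, hK, hKX⟩ := exists_ses_of_mem_resDimLE hext hgen hX
    obtain ⟨m, hm⟩ := ih hK (hEK hKX hV.2 hXS)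
    exact ⟨m + 1, mem_resDimLE_succ hKX hm hV⟩

lemma resFin_inter_eq (hext : ClosedUnderExtensions ω)
    (hgen : IsRelativeGenerator (ω ∩ 𝒮) ω)
    (hEK : ClosedUnderEpiKernels 𝒮) (hMC : ClosedUnderMonoCokernels 𝒮) :
    ResFin ω ∩ 𝒮 = ResFin (ω ∩ 𝒮) := by
  ext X
  constructor
  · rintro ⟨⟨n, hX⟩, hXS⟩
    exact mem_resFin_inter hext hgen hEK hMC hX hXS
  · rintro ⟨n, hX⟩
    exact ⟨⟨n, resDimLE_subset_of_subset Set.inter_subset_left n hX⟩,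
      resDimLE_inter_subset hEK hMC n hX⟩

lemma resDim_eq_of_minimal {B : Set C} {X : C} {n : ℕ} (h : X ∈ ResDimLE B n)
    (hmin : ∀ m, X ∈ ResDimLE B m → n ≤ m) : resDim B X = n :=
  le_antisymm (sInf_le ⟨n, h, rfl⟩)
    (le_sInf (by rintro _ ⟨m, hm, rfl⟩; exact Nat.cast_le.2 (hmin m hm)))

lemma exists_ses_resDim_eq_sub_one (hext : ClosedUnderExtensions ω)
    (hgen : IsRelativeGenerator ν ω) {X : C} (hX : X ∈ ResFin ω) (h1 : 1 ≤ resDim ω X) :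
    ∃ K F, F ∈ ν ∧ SES K F X ∧ resDim ω K = resDim ω X - 1 := by
  classical
  have hmin : ∀ m, X ∈ ResDimLE ω m → Nat.find hX ≤ m := fun m hm => Nat.find_min' hX hm
  have hdim : resDim ω X = Nat.find hX := resDim_eq_of_minimal (Nat.find_spec hX) hmin
  obtain ⟨K, F, hF, hK, hKX⟩ := exists_ses_of_mem_resDimLE hext hgen (Nat.find_spec hX)
  refine ⟨K, F, hF, hKX, ?_⟩
  have hKmin : ∀ m, K ∈ ResDimLE ω m → Nat.find hX - 1 ≤ m := fun m hm => by
    have := hmin _ (mem_resDimLE_succ hKX hm (hgen.1 hF))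
    omega
  have hn : 1 ≤ Nat.find hX := by exact_mod_cast hdim ▸ h1
  rw [resDim_eq_of_minimal hK hKmin, hdim]
  norm_cast

end ResolutionDimension

section ProjectiveGenerator

variable {C : Type u} [Category.{v} C] [Abelian C] [HasExt.{w} C] {ω ν : Set C}

lemma extVanish_of_mem_resDimLE (hproj : ExtPairVanish.{w} ν ω) {V X : C} (hV : V ∈ ν)
    {n : ℕ} (hX : X ∈ ResDimLE ω n) : extVanish.{w} V X := by
  induction n generalizing X with
  | zero =>
    obtain ⟨W, hW, ⟨e⟩⟩ := hX
    exact extVanish_of_iso e (hproj V hV W hW)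
  | succ n ih =>
    rcases hX with hX | ⟨K, W, hK, hW, hKX⟩
    · exact ih hX
    · exact extVanish_right_of_ses hKX (ih hK) (hproj V hV W hW)

lemma extPairVanish_resFin (hproj : ExtPairVanish.{w} ν ω) : ExtPairVanish.{w} ν (ResFin ω) :=
  fun _ hV _ ⟨_, hX⟩ => extVanish_of_mem_resDimLE hproj hV hX

lemma mem_resDimLE_right_of_ses (hext : ClosedUnderExtensions ω)
    (hproj : ExtPairVanish.{w} ν ω) (hgen : IsRelativeGenerator ν ω) {K M Y : C} {a b : ℕ}
    (h : SES K M Y) (hK : K ∈ ResDimLE ω a) (hM : M ∈ ResDimLE ω b) :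
    Y ∈ ResDimLE ω (a + b + 1) := by
  induction b generalizing a K M Y with
  | zero =>
    obtain ⟨W, hW, ⟨e⟩⟩ := hM
    exact mem_resDimLE_succ (h.of_iso_s10 (Iso.refl _) e (Iso.refl _)) hK hW
  | succ b ih =>
    rcases hM with hM | ⟨K_M, W, hKM, hW, hKMM⟩
    · exact resDimLE_mono (by omega) (ih h hK hM)
    · obtain ⟨L, hKML, hLY⟩ := hKMM.comp h
      obtain ⟨K', V, hV, hK', hK'K⟩ := exists_ses_of_mem_resDimLE hext hgen hK
      have hK'L : SES K' (K_M ⊞ V) L :=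
        hKML.horseshoe hK'K (extVanish_of_mem_resDimLE hproj hV hKM 1 le_rfl)
      have hL := ih hK'L hK' (biprod_mem_resDimLE hext hKM (hgen.1 hV))
      exact resDimLE_mono (by omega) (mem_resDimLE_succ hLY hL hW)

lemma resFin_closedUnderExtensions (hext : ClosedUnderExtensions ω)
    (hproj : ExtPairVanish.{w} ν ω) (hgen : IsRelativeGenerator ν ω) :
    ClosedUnderExtensions (ResFin ω) := by
  rintro X Y Z h ⟨n, hX⟩ ⟨m, hZ⟩
  obtain ⟨K, V, hV, hK, hKZ⟩ := exists_ses_of_mem_resDimLE hext hgen hZ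
  have hKY : SES K (X ⊞ V) Y :=
    h.horseshoe hKZ (extVanish_of_mem_resDimLE hproj hV hX 1 le_rfl)
  exact ⟨_, mem_resDimLE_right_of_ses hext hproj hgen hKY hK
    (biprod_mem_resDimLE hext hX (hgen.1 hV))⟩

lemma mem_resDimLE_of_biprod (hext : ClosedUnderExtensions ω)
    (hproj : ExtPairVanish.{w} ν ω) (hgen : IsRelativeGenerator ν ω)
    (hsum : ClosedUnderDirectSummands ω) {X Z : C} {n : ℕ} (h : (X ⊞ Z) ∈ ResDimLE ω n) :
    X ∈ ResDimLE ω n := by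
  induction n generalizing X Z with
  | zero =>
    obtain ⟨W, hW, ⟨e⟩⟩ := h
    exact mem_resDimLE_zero (hsum (biprod.inl ≫ e.hom) (e.inv ≫ biprod.fst) (by simp) hW)
  | succ n ih =>
    obtain ⟨K, V, hV, hK, hKV⟩ := exists_ses_of_mem_resDimLE hext hgen h
    obtain ⟨F, hKF, hFV⟩ := hKV.comp (SES.biprod_symm X Z)
    obtain ⟨E, hKE, hEV⟩ := hKV.comp (SES.biprod X Z)
    have hVK := extVanish_of_mem_resDimLE hproj hV hK
    have hVXZ := extVanish_of_mem_resDimLE hproj hV h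
    have hVF := extVanish_middle_of_ses hKF hVK (extVanish_of_retract biprod.inr_snd hVXZ)
    have hVE := extVanish_middle_of_ses hKE hVK (extVanish_of_retract biprod.inl_fst hVXZ)
    -- Schanuel's lemma for the two resolutions `V ⟶ X ⊞ Z` and `V ⊞ V ⟶ X ⊞ Z`
    obtain ⟨e⟩ := hKV.schanuel (hFV.biprod_map hEV)
      (subsingleton_ext_biprod (hVK 1 le_rfl) (hVK 1 le_rfl))
      (extVanish_middle_of_ses (SES.biprod F E) hVF hVE 1 le_rfl)
    have hVV : (V ⊞ V) ∈ ω := hext (SES.biprod V V) (hgen.1 hV) (hgen.1 hV)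
    have hFEV := mem_resDimLE_of_iso e (biprod_mem_resDimLE hext hK hVV)
    exact mem_resDimLE_succ hFV (ih (ih hFEV)) (hgen.1 hV)

lemma resFin_closedUnderDirectSummands (hext : ClosedUnderExtensions ω)
    (hproj : ExtPairVanish.{w} ν ω) (hgen : IsRelativeGenerator ν ω)
    (hsum : ClosedUnderDirectSummands ω) : ClosedUnderDirectSummands (ResFin ω) := by
  rintro X Y i r hir ⟨n, hY⟩
  let S := ShortComplex.mk i (cokernel.π i) (cokernel.condition i)
  let e : Y ≅ X ⊞ cokernel i := (ShortComplex.Splitting.ofExactOfRetraction S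
    (S.exact_of_g_is_cokernel (cokernelIsCokernel i)) r hir inferInstance).isoBinaryBiproduct
  exact ⟨n, mem_resDimLE_of_biprod hext hproj hgen hsum (mem_resDimLE_of_iso e hY)⟩

end ProjectiveGenerator

/-- Lemma 3.5. Let `ω` and `𝒮` be classes such that `ω` is closed under
extensions and `ω ∩ 𝒮` is an `ω`-projective relative generator in `ω`. Then (1) `ω ∩ 𝒮` is an
`ω^∧`-projective relative generator in `ω^∧`, with control of resolution dimensions;
(2) `ω^∧` is closed under extensions; (3) if `ω` is closed under direct summands then so is
`ω^∧`; (4) if moreover `ω` is closed under isomorphisms and `𝒮` is closed under epi-kernels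
and mono-cokernels, then `ω^∧ ∩ 𝒮 = (ω ∩ 𝒮)^∧`. -/
theorem resFin_closure_of_relativeGenerator
    {C : Type u} [CategoryTheory.Category.{v} C] [CategoryTheory.Abelian C]
    [CategoryTheory.HasExt.{w} C]
    (ω 𝒮 : Set C)
    (hext : ClosedUnderExtensions ω)
    (hproj : ExtPairVanish.{w} (ω ∩ 𝒮) ω)
    (hgen : IsRelativeGenerator (ω ∩ 𝒮) ω) :
    ((ExtPairVanish.{w} (ω ∩ 𝒮) (ResFin ω) ∧ IsRelativeGenerator (ω ∩ 𝒮) (ResFin ω)) ∧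
      (∀ X ∈ ResFin ω, 1 ≤ resDim ω X →
        ∃ K F, F ∈ ω ∩ 𝒮 ∧ SES K F X ∧ resDim ω K = resDim ω X - 1)) ∧
    ClosedUnderExtensions (ResFin ω) ∧
    (ClosedUnderDirectSummands ω → ClosedUnderDirectSummands (ResFin ω)) ∧
    (ClosedUnderIso ω → ClosedUnderEpiKernels 𝒮 → ClosedUnderMonoCokernels 𝒮 →
      ResFin ω ∩ 𝒮 = ResFin (ω ∩ 𝒮)) :=
  ⟨⟨⟨extPairVanish_resFin hproj, isRelativeGenerator_resFin hext hgen⟩,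
      fun _ hX h1 => exists_ses_resDim_eq_sub_one hext hgen hX h1⟩,
    resFin_closedUnderExtensions hext hproj hgen,
    resFin_closedUnderDirectSummands hext hproj hgen,
    fun _ hEK hMC => resFin_inter_eq hext hgen hEK hMC⟩

end CutPaper
end
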